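/- Let R be a real symmetric positive-definite n×n matrix whose traceless part R̄ = R - (tr(R)/n)·I is nonzero. Define g(β) = tr(exp(β R̄)·exp(β R̄)ᵀ·R). Then the derivative of g at β = 0 equals 2·tr(R̄²), which is strictly positive; hence for sufficiently small negative β, g(β) < g(0). -/

import Mathlib

/-!
Since `exp (β • R̄)ᵀ = exp (β • R̄ᵀ)`, the derivative at `0` of `exp (β • R̄) * exp (β • R̄)ᵀ` is
`R̄ + R̄ᵀ = 2 • R̄`, so `g' 0 = 2 tr (R̄ R)`. Writing `R = R̄ + (tr R / n) • 1` and using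
`tr R̄ = 0` gives `g' 0 = 2 tr (R̄ ^ 2)`, which for a nonzero symmetric `R̄` is twice its squared
Frobenius norm, hence positive; a positive derivative makes `g` smaller just left of `0`.
-/

open Matrix Filter Topology

theorem hasDerivAt_exp_smul_mul_exp_smul_zero {𝕂 𝔸 : Type*} [RCLike 𝕂] [NormedRing 𝔸]
    [NormedAlgebra 𝕂 𝔸] [CompleteSpace 𝔸] (a b : 𝔸) :
    HasDerivAt (fun t : 𝕂 => NormedSpace.exp (t • a) * NormedSpace.exp (t • b)) (a + b) 0 := by
  have h := (hasDerivAt_exp_smul_const' a (0 : 𝕂)).mul (hasDerivAt_exp_smul_const' b 0)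
  simp only [zero_smul, NormedSpace.exp_zero, mul_one, one_mul] at h
  exact h

namespace Matrix

variable {m : Type*} [Fintype m]

theorem trace_sub_trace_div_card_smul_one [DecidableEq m] {α : Type*} [Field α] [CharZero α]
    (A : Matrix m m α) : (A - (A.trace / Fintype.card m) • (1 : Matrix m m α)).trace = 0 := by
  rcases isEmpty_or_nonempty m with _ | _
  · simp [trace]
  · rw [trace_sub, trace_smul, trace_one, smul_eq_mul,
      div_mul_cancel₀ _ (Nat.cast_ne_zero.mpr Fintype.card_ne_zero), sub_self]

theorem trace_sub_smul_one_mul_eq_trace_mul_self [DecidableEq m] {α : Type*} [CommRing α]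
    (A : Matrix m m α) (c : α) (h : (A - c • 1).trace = 0) :
    ((A - c • 1) * A).trace = ((A - c • 1) * (A - c • 1)).trace := by
  rw [Matrix.mul_sub (A - c • 1) A, Matrix.mul_smul, Matrix.mul_one, trace_sub, trace_smul, h,
    smul_zero, sub_zero]

theorem IsHermitian.trace_mul_self_pos {R : Type*} [CommRing R] [PartialOrder R] [StarRing R]
    [StarOrderedRing R] [NoZeroDivisors R] {A : Matrix m m R} (hA : A.IsHermitian) (h : A ≠ 0) :
    0 < (A * A).trace := by
  have hnonneg := (posSemidef_conjTranspose_mul_self A).trace_nonneg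
  rw [hA.eq] at hnonneg
  refine hnonneg.lt_of_ne' fun h0 => h ?_
  rw [← trace_conjTranspose_mul_self_eq_zero_iff, hA.eq, h0]

theorem hasDerivAt_trace_exp_smul_mul_transpose_exp_smul_mul [DecidableEq m] {𝕂 : Type*}
    [RCLike 𝕂] (A B : Matrix m m 𝕂) :
    HasDerivAt (fun t : 𝕂 => (NormedSpace.exp (t • A) * (NormedSpace.exp (t • A))ᵀ * B).trace)
      ((A + Aᵀ) * B).trace 0 := by
  -- Matrices carry no global norm; any submultiplicative one induces the product topology.
  let : SeminormedRing (Matrix m m 𝕂) := Matrix.linftyOpSemiNormedRing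
  let : NormedRing (Matrix m m 𝕂) := Matrix.linftyOpNormedRing
  let : NormedAlgebra 𝕂 (Matrix m m 𝕂) := Matrix.linftyOpNormedAlgebra
  have : @CompleteSpace (Matrix m m 𝕂) PseudoMetricSpace.toUniformSpace :=
    FiniteDimensional.complete 𝕂 _
  have hprod := (hasDerivAt_exp_smul_mul_exp_smul_zero (𝕂 := 𝕂) A Aᵀ).mul_const B
  simp_rw [← exp_transpose, transpose_smul]
  exact (traceLinearMap m 𝕂 𝕂).toContinuousLinearMap.hasFDerivAt.comp_hasDerivAt 0 hprod

end Matrix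

theorem HasDerivAt.eventually_nhdsLT_lt {f : ℝ → ℝ} {f' x : ℝ} (hf : HasDerivAt f f' x)
    (hf' : 0 < f') : ∀ᶠ y in 𝓝[<] x, f y < f x := by
  have hslope : ∀ᶠ y in 𝓝[<] x, 0 < slope f x y :=
    ((hasDerivAt_iff_tendsto_slope.mp hf).mono_left (nhdsLT_le_nhdsNE x)).eventually
      (eventually_gt_nhds hf')
  filter_upwards [hslope, self_mem_nhdsWithin] with y hy hyx
  have hsub := sub_smul_slope f x y
  rw [smul_eq_mul, vsub_eq_sub] at hsub
  linarith [mul_neg_of_neg_of_pos (sub_neg.mpr hyx) hy]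

theorem deriv_perturbed_nsm {n : ℕ}
    (R : Matrix (Fin n) (Fin n) ℝ) (hR : R.PosDef)
    (Rbar : Matrix (Fin n) (Fin n) ℝ)
    (hRbar : Rbar = R - (R.trace / (n : ℝ)) • (1 : Matrix (Fin n) (Fin n) ℝ))
    (hne : Rbar ≠ 0)
    (g : ℝ → ℝ)
    (hg : g = fun β : ℝ =>
      (NormedSpace.exp (β • Rbar) * (NormedSpace.exp (β • Rbar))ᵀ * R).trace) :
    HasDerivAt g (2 * (Rbar * Rbar).trace) 0 ∧
    0 < (Rbar * Rbar).trace ∧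
    ∃ δ > 0, ∀ β : ℝ, -δ < β → β < 0 → g β < g 0 := by
  have hsymm : Rbar.IsSymm :=
    hRbar ▸ (isHermitian_iff_isSymm.mp hR.isHermitian).sub (isSymm_one.smul _)
  have htrace : Rbar.trace = 0 := by
    simpa [hRbar] using trace_sub_trace_div_card_smul_one R
  have hderiv : HasDerivAt g (2 * (Rbar * Rbar).trace) 0 := by
    have hderiv_eq : ((Rbar + Rbarᵀ) * R).trace = 2 * (Rbar * Rbar).trace := by
      rw [hsymm.eq, ← two_smul ℝ Rbar, smul_mul_assoc, trace_smul, smul_eq_mul]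
      congr 1
      subst hRbar
      exact trace_sub_smul_one_mul_eq_trace_mul_self R _ htrace
    exact hg ▸ hderiv_eq ▸ hasDerivAt_trace_exp_smul_mul_transpose_exp_smul_mul Rbar R
  have hpos := (isHermitian_iff_isSymm.mpr hsymm).trace_mul_self_pos hne
  refine ⟨hderiv, hpos, ?_⟩
  obtain ⟨l, hl, hsub⟩ :=
    mem_nhdsLT_iff_exists_Ioo_subset.mp (hderiv.eventually_nhdsLT_lt (by positivity))
  exact ⟨-l, neg_pos.mpr hl, fun β h1 h2 => hsub ⟨by linarith, h2⟩⟩
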